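/- arXiv:1510.00611 — 3 statements merged into one kernel-verified Lean document; each statement's English description precedes it below -/
import Mathlib

section
/- For every integer n ≥ 2 and every vector b ∈ ℝ^{n-1}, one has ⟨b⁺, Aⁿ b⟩ ≤ 0, where b⁺ denotes the componentwise positive part of b (i.e. (b⁺)_k = max(b_k, 0)) and ⟨·,·⟩ is the Euclidean inner product on ℝ^{n-1}. -/
open scoped BigOperators

/-- The `(n-1) × (n-1)` tridiagonal matrix `Aⁿ` with `-2` on the diagonal and
`1` on the sub/super-diagonals. -/
def An (n : ℕ) : Matrix (Fin (n-1)) (Fin (n-1)) ℝ :=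
  Matrix.of fun k i => if k = i then -2 else if |(k : ℤ) - (i : ℤ)| = 1 then 1 else 0

/-- For every `n ≥ 2` and every `b ∈ ℝ^{n-1}`, `⟨b⁺, Aⁿ b⟩ ≤ 0`. -/
theorem pos_part_inner_An_nonpos (n : ℕ) (hn : 2 ≤ n) (b : Fin (n-1) → ℝ) :
    ∑ k, max (b k) 0 * (An n).mulVec b k ≤ 0 := by
  classical
  set f : ℕ → ℝ := fun j => if h : 1 ≤ j ∧ j ≤ n - 1 then b ⟨j - 1, by omega⟩ else 0 with hf
  set p : ℕ → ℝ := fun j => max (f j) 0 with hp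
  have hf0 : f 0 = 0 := by simp [hf]
  have hftop : ∀ j, n - 1 < j → f j = 0 := by
    intro j hj
    simp only [hf]
    rw [dif_neg (by omega)]
  have hf1 : ∀ k : Fin (n - 1), f ((k : ℕ) + 1) = b k := by
    intro k
    have hkm : (k : ℕ) < n - 1 := k.isLt
    simp only [hf]
    rw [dif_pos ⟨by omega, by omega⟩]
    exact congrArg b (Fin.ext (by simp))
  -- compute mulVec
  have hmul : ∀ k : Fin (n - 1),
      (An n).mulVec b k = f k + f ((k : ℕ) + 2) - 2 * f ((k : ℕ) + 1) := by
    intro k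
    have hkm : (k : ℕ) < n - 1 := k.isLt
    have habs : ∀ i : Fin (n - 1),
        (|(k : ℤ) - (i : ℤ)| = 1) ↔ ((i : ℕ) + 1 = (k : ℕ) ∨ (i : ℕ) = (k : ℕ) + 1) := by
      intro i
      rw [abs_eq (by norm_num : (0:ℤ) ≤ 1)]
      omega
    have hsplit : ∀ i : Fin (n - 1), An n k i * b i =
        (if i = k then (-2) * b i else 0) +
        ((if (i : ℕ) + 1 = (k : ℕ) then b i else 0) +
         (if (i : ℕ) = (k : ℕ) + 1 then b i else 0)) := by
      intro i
      simp only [An, Matrix.of_apply]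
      by_cases h1 : k = i
      · have hik : i = k := h1.symm
        have hik' : (i : ℕ) = (k : ℕ) := by rw [h1]
        rw [if_pos h1, if_pos hik, if_neg (by omega), if_neg (by omega)]
        ring
      · have hik : ¬ i = k := fun h => h1 h.symm
        rw [if_neg h1, if_neg hik]
        by_cases h2 : |(k : ℤ) - (i : ℤ)| = 1
        · rw [if_pos h2]
          rcases (habs i).mp h2 with h3 | h3
          · rw [if_pos h3, if_neg (by omega)]; ring
          · have h4 : ¬ ((i : ℕ) + 1 = (k : ℕ)) := by omega
            rw [if_neg h4, if_pos h3]; ring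
        · have h3 := h2
          rw [habs i] at h3
          push_neg at h3
          rw [if_neg h2, if_neg h3.1, if_neg h3.2]
          ring
    have hsum1 : ∑ i : Fin (n - 1), (if i = k then (-2) * b i else 0) = -2 * b k := by
      simp
    have hsum2 : ∑ i : Fin (n - 1), (if (i : ℕ) + 1 = (k : ℕ) then b i else 0) = f k := by
      by_cases hk : (k : ℕ) = 0
      · rw [Finset.sum_eq_zero (fun i _ => by rw [if_neg (by omega)])]
        simp [hf, hk]
      · set k' : Fin (n - 1) := ⟨(k : ℕ) - 1, by omega⟩ with hk'
        have hiff : ∀ i : Fin (n - 1), ((i : ℕ) + 1 = (k : ℕ)) ↔ i = k' := by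
          intro i
          constructor
          · intro h; exact Fin.ext (by simp only [hk']; omega)
          · intro h; subst h; simp only [hk']; omega
        have e1 : (∑ i : Fin (n - 1), if (i : ℕ) + 1 = (k : ℕ) then b i else 0)
            = ∑ i : Fin (n - 1), if i = k' then b i else 0 :=
          Finset.sum_congr rfl (fun i _ => by simp only [hiff i])
        rw [e1, Finset.sum_ite_eq' Finset.univ k' b, if_pos (Finset.mem_univ _)]
        simp only [hf]
        rw [dif_pos ⟨by omega, by omega⟩]
        all_goals exact congrArg b (Fin.ext (by simp only [hk']; omega))
    have hsum3 : ∑ i : Fin (n - 1), (if (i : ℕ) = (k : ℕ) + 1 then b i else 0)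
        = f ((k : ℕ) + 2) := by
      by_cases hk : (k : ℕ) + 1 < n - 1
      · set k' : Fin (n - 1) := ⟨(k : ℕ) + 1, hk⟩ with hk'
        have hiff : ∀ i : Fin (n - 1), ((i : ℕ) = (k : ℕ) + 1) ↔ i = k' := by
          intro i
          constructor
          · intro h; exact Fin.ext (by simp only [hk']; omega)
          · intro h; subst h; simp only [hk']
        have e1 : (∑ i : Fin (n - 1), if (i : ℕ) = (k : ℕ) + 1 then b i else 0)
            = ∑ i : Fin (n - 1), if i = k' then b i else 0 :=
          Finset.sum_congr rfl (fun i _ => by simp only [hiff i])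
        rw [e1, Finset.sum_ite_eq' Finset.univ k' b, if_pos (Finset.mem_univ _)]
        simp only [hf]
        rw [dif_pos ⟨by omega, by omega⟩]
        all_goals exact congrArg b (Fin.ext (by simp only [hk']; omega))
      · rw [Finset.sum_eq_zero (fun i _ => by rw [if_neg (by omega)])]
        rw [hftop _ (by omega)]
    rw [Matrix.mulVec, dotProduct]
    rw [Finset.sum_congr rfl (fun i _ => hsplit i), Finset.sum_add_distrib,
      Finset.sum_add_distrib, hsum1, hsum2, hsum3, hf1 k]
    ring
  -- rewrite the whole sum
  have hT : ∑ k, max (b k) 0 * (An n).mulVec b k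
      = ∑ j ∈ Finset.range (n - 1), p (j + 1) * (f j + f (j + 2) - 2 * f (j + 1)) := by
    rw [← Fin.sum_univ_eq_sum_range
      (fun j => p (j + 1) * (f j + f (j + 2) - 2 * f (j + 1))) (n - 1)]
    apply Finset.sum_congr rfl
    intro k _
    rw [hmul k, hp]
    simp only [hf1 k]
  rw [hT]
  set g : ℕ → ℝ := fun j => p (j + 1) * (f j + f (j + 2) - 2 * f (j + 1)) with hg
  have hpm : p (n - 1 + 1) = 0 := by rw [hp]; simp [hftop (n - 1 + 1) (by omega)]
  have hgm : g (n - 1) = 0 := by simp [hg, hpm]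
  have hext : ∑ j ∈ Finset.range (n - 1), g j = ∑ j ∈ Finset.range (n - 1 + 1), g j := by
    rw [Finset.sum_range_succ, hgm, add_zero]
  rw [hext]
  set F : ℕ → ℝ := fun j => p j * f (j + 1) - p j * f j with hF
  set q : ℕ → ℝ := fun j => (p (j + 1) - p j) * (f (j + 1) - f j) with hq
  have key : ∀ j, g j = (F (j + 1) - F j) - q j := by
    intro j; simp only [hg, hF, hq]; ring
  have hsum : ∑ j ∈ Finset.range (n - 1 + 1), g j
      = (F (n - 1 + 1) - F 0) - ∑ j ∈ Finset.range (n - 1 + 1), q j := by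
    rw [Finset.sum_congr rfl (fun j _ => key j), Finset.sum_sub_distrib,
      Finset.sum_range_sub F]
  have hF0 : F 0 = 0 := by simp [hF, hp, hf0]
  have hFm : F (n - 1 + 1) = 0 := by simp [hF, hpm]
  rw [hsum, hF0, hFm]
  have hqnn : ∀ j, 0 ≤ q j := by
    intro j
    show 0 ≤ (p (j + 1) - p j) * (f (j + 1) - f j)
    rcases le_total (f j) (f (j + 1)) with h | h
    · exact mul_nonneg (by simp only [hp]; simp only [sub_nonneg]; exact max_le_max h le_rfl)
        (by linarith)
    · have ha : p (j + 1) - p j ≤ 0 := by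
        simp only [hp]; simp only [sub_nonpos]; exact max_le_max h le_rfl
      have hb : f (j + 1) - f j ≤ 0 := by linarith
      nlinarith [mul_nonneg (neg_nonneg.2 ha) (neg_nonneg.2 hb)]
  have hqsum : 0 ≤ ∑ j ∈ Finset.range (n - 1 + 1), q j :=
    Finset.sum_nonneg (fun j _ => hqnn j)
  linarith
end

section
/- For every integer n ≥ 2 and every vector b ∈ ℝ^{n-1}, one has ⟨b⁻, Aⁿ b⟩ ≥ 0, where b⁻ denotes the componentwise negative part of b (i.e. (b⁻)_k = max(-b_k, 0)) and ⟨·,·⟩ is the Euclidean inner product on ℝ^{n-1}. -/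
open scoped BigOperators

/-- For every `n ≥ 2` and every `b ∈ ℝ^{n-1}`, `⟨b⁻, Aⁿ b⟩ ≥ 0`. -/
theorem neg_part_inner_An_nonneg (n : ℕ) (hn : 2 ≤ n) (b : Fin (n-1) → ℝ) :
    ∑ k, max (-b k) 0 * (An n).mulVec b k ≥ 0 := by
  set m : Fin (n-1) → ℝ := fun k => max (-b k) 0 with hm_def
  have hm : ∀ k, 0 ≤ m k := fun k => le_max_right _ _
  have hb : ∀ k, -(m k) ≤ b k := by
    intro k
    have : -b k ≤ m k := le_max_left _ _
    linarith
  have hmb : ∀ k, m k * b k = -(m k)^2 := by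
    intro k
    rcases le_or_gt 0 (b k) with h | h
    · have h0 : m k = 0 := by
        simp only [hm_def]; rw [max_eq_right]; linarith
      simp [h0]
    · have h0 : m k = -b k := by
        simp only [hm_def]; rw [max_eq_left]; linarith
      rw [h0]; ring
  have hLHS : ∑ k, m k * (An n).mulVec b k
      = ∑ k, ∑ i, m k * (An n k i * b i) := by
    simp [Matrix.mulVec, dotProduct, Finset.mul_sum]
  rw [ge_iff_le, hLHS]
  set g : Fin (n-1) → Fin (n-1) → ℝ := fun k i =>
    (if k = i then 2 * m k ^ 2 else 0)
      + (if |(k : ℤ) - (i : ℤ)| = 1 then -((m k ^ 2 + m i ^ 2) / 2) else 0) with hg_def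
  have step1 : ∀ k i, g k i ≤ m k * (An n k i * b i) := by
    intro k i
    by_cases hki : k = i
    · subst hki
      have habs : ¬ (|(k : ℤ) - (k : ℤ)| = 1) := by simp
      have hA : An n k k = -2 := by simp [An]
      simp only [hg_def, if_pos rfl, eq_self_iff_true, if_true, if_neg habs, hA, add_zero]
      have h2 : m k * (-2 * b k) = 2 * m k ^ 2 := by linear_combination (-2 : ℝ) * hmb k
      rw [h2]
    · by_cases habs : |(k : ℤ) - (i : ℤ)| = 1
      · have hA : An n k i = 1 := by simp [An, hki, habs]
        simp only [hg_def, if_neg hki, if_pos habs, hA, zero_add, one_mul]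
        nlinarith [hm k, hm i, hb i, sq_nonneg (m k - m i)]
      · have hA : An n k i = 0 := by simp [An, hki, habs]
        simp [hg_def, hki, habs, hA]
  refine le_trans ?_ (Finset.sum_le_sum fun k _ => Finset.sum_le_sum fun i _ => step1 k i)
  have hsplit : ∑ k, ∑ i, g k i
      = (∑ k : Fin (n-1), 2 * m k ^ 2)
        - ∑ k : Fin (n-1), ∑ i : Fin (n-1),
            (if |(k : ℤ) - (i : ℤ)| = 1 then (m k ^ 2 + m i ^ 2) / 2 else 0) := by
    rw [← Finset.sum_sub_distrib]
    refine Finset.sum_congr rfl fun k _ => ?_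
    rw [hg_def, Finset.sum_add_distrib]
    have h1 : (∑ x : Fin (n-1), if k = x then 2 * m k ^ 2 else 0) = 2 * m k ^ 2 := by simp
    have h2 : (∑ x : Fin (n-1), if |(k:ℤ) - (x:ℤ)| = 1 then -((m k ^ 2 + m x ^ 2) / 2) else 0)
        = - ∑ x : Fin (n-1), if |(k:ℤ) - (x:ℤ)| = 1 then (m k ^ 2 + m x ^ 2) / 2 else 0 := by
      rw [← Finset.sum_neg_distrib]
      exact Finset.sum_congr rfl fun x _ => by split <;> simp
    rw [h1, h2]; ring
  rw [hsplit, sub_nonneg]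
  have hsplit2 : ∀ k i : Fin (n-1),
      (if |(k:ℤ)-(i:ℤ)| = 1 then (m k ^2 + m i ^2)/2 else 0)
      = (if |(k:ℤ)-(i:ℤ)| = 1 then m k ^2 / 2 else 0)
        + (if |(k:ℤ)-(i:ℤ)| = 1 then m i ^2 / 2 else 0) := by
    intro k i; split <;> ring
  have hswap : (∑ k : Fin (n-1), ∑ i : Fin (n-1), if |(k:ℤ)-(i:ℤ)| = 1 then m i ^2 / 2 else 0)
      = ∑ k : Fin (n-1), ∑ i : Fin (n-1), if |(k:ℤ)-(i:ℤ)| = 1 then m k ^2 / 2 else 0 := by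
    rw [Finset.sum_comm]
    refine Finset.sum_congr rfl fun k _ => Finset.sum_congr rfl fun i _ => ?_
    rw [abs_sub_comm]
  have hbound : ∀ k : Fin (n-1),
      (∑ i : Fin (n-1), if |(k:ℤ)-(i:ℤ)| = 1 then m k ^2 / 2 else 0) ≤ m k ^ 2 := by
    intro k
    rw [← Finset.sum_filter, Finset.sum_const, nsmul_eq_mul]
    have hcard : (Finset.univ.filter fun i : Fin (n-1) => |(k:ℤ)-(i:ℤ)| = 1).card ≤ 2 := by
      have hsub : ∀ i ∈ (Finset.univ.filter fun i : Fin (n-1) => |(k:ℤ)-(i:ℤ)| = 1),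
          ((i : ℤ)) ∈ ({(k:ℤ)-1, (k:ℤ)+1} : Finset ℤ) := by
        intro i hi
        simp only [Finset.mem_filter, Finset.mem_univ, true_and] at hi
        rcases (abs_eq (by norm_num : (0:ℤ) ≤ 1)).mp hi with h | h <;>
          simp only [Finset.mem_insert, Finset.mem_singleton] <;> omega
      have hinj : ∀ i ∈ (Finset.univ.filter fun i : Fin (n-1) => |(k:ℤ)-(i:ℤ)| = 1),
          ∀ j ∈ (Finset.univ.filter fun i : Fin (n-1) => |(k:ℤ)-(i:ℤ)| = 1),
          ((i : ℤ)) = ((j : ℤ)) → i = j := by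
        intro i _ j _ h
        exact Fin.ext (by exact_mod_cast h)
      calc (Finset.univ.filter fun i : Fin (n-1) => |(k:ℤ)-(i:ℤ)| = 1).card
          ≤ ({(k:ℤ)-1, (k:ℤ)+1} : Finset ℤ).card :=
            Finset.card_le_card_of_injOn _ hsub hinj
        _ ≤ 2 := (Finset.card_insert_le _ _).trans (by simp)
    have hc : ((Finset.univ.filter fun i : Fin (n-1) => |(k:ℤ)-(i:ℤ)| = 1).card : ℝ) ≤ 2 := by
      exact_mod_cast hcard
    nlinarith [sq_nonneg (m k)]
  calc ∑ k : Fin (n-1), ∑ i : Fin (n-1),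
        (if |(k:ℤ)-(i:ℤ)| = 1 then (m k ^2 + m i ^2)/2 else 0)
      = (∑ k : Fin (n-1), ∑ i : Fin (n-1), if |(k:ℤ)-(i:ℤ)| = 1 then m k ^2 / 2 else 0)
        + (∑ k : Fin (n-1), ∑ i : Fin (n-1), if |(k:ℤ)-(i:ℤ)| = 1 then m i ^2 / 2 else 0) := by
        simp_rw [hsplit2]
        rw [← Finset.sum_add_distrib]
        exact Finset.sum_congr rfl fun k _ => Finset.sum_add_distrib
    _ = 2 * ∑ k : Fin (n-1), ∑ i : Fin (n-1),
          (if |(k:ℤ)-(i:ℤ)| = 1 then m k ^2 / 2 else 0) := by rw [hswap]; ring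
    _ ≤ 2 * ∑ k : Fin (n-1), m k ^ 2 := by
        have := Finset.sum_le_sum fun k (_ : k ∈ Finset.univ) => hbound k
        linarith
    _ = ∑ k : Fin (n-1), 2 * m k ^ 2 := by rw [Finset.mul_sum]
end

section
/- Fix an integer n ≥ 2 and let V¹, V² : [0,∞) → ℝ^{n-1} be continuous. If (Z¹, η¹) is a solution of the Skorohod-type problem with data V¹ and (Z², η²) is a solution of the Skorohod-type problem with data V², then for every T > 0 and every k with 1 ≤ k ≤ n-1, sup_{0 ≤ t ≤ T} |Z¹_k(t) - Z²_k(t)| ≤ sup_{0 ≤ t ≤ T, 1 ≤ j ≤ n-1} |V¹_j(t) - V²_j(t)|. -/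
/-!
Compare the two solutions through `W = Z¹ - Z²` and `M = sup |V¹ - V²|`. If `W` ever exceeded `M`,
then at a time `t > 0` where the largest coordinate `W_k` exceeds `M`, the constraint of the first
problem is slack (`Z¹_k + V¹_k > 0`), so `η¹_k` is constant just before `t`; moreover `Aⁿ` has
nonnegative off-diagonal entries and nonpositive row sums, so `(AⁿW)_k ≤ 0` at a maximal
coordinate. Since `η²_k` only pushes `W_k` down, the left slope of `W_k` at `t` is at most `0`,
which is incompatible with `W` first exceeding `M` from `W(0) = 0`. Exchanging the two
solutions gives the bound on `|W_k|`.
-/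

open MeasureTheory

/-- `(Z, η)` is a solution of the Skorohod-type problem
`dZ(t) = n²AⁿZ(t)dt + dη(t)`, `Z(t) ≥ -V(t)`, `∫₀ᵗ ⟨Z+V, dη⟩ = 0` with data `V`:
`Z` is continuous with `Z_i(t) ≥ -V_i(t)`; each `η_i` is a continuous nondecreasing
(Stieltjes) function with `η_i(0) = 0`; `Z(t) = ∫₀ᵗ n²AⁿZ(s) ds + η(t)`; and
`Σ_i ∫_{[0,t]} (Z_i(s) + V_i(s)) dη_i(s) = 0` (Lebesgue–Stieltjes integrals). -/
def IsSkorohodSolution (n : ℕ) (V : ℝ → Fin (n-1) → ℝ)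
    (Z : ℝ → Fin (n-1) → ℝ) (η : Fin (n-1) → StieltjesFunction ℝ) : Prop :=
  ContinuousOn Z (Set.Ici 0) ∧
  (∀ t ≥ (0:ℝ), ∀ i, Z t i ≥ -V t i) ∧
  (∀ i, Continuous (η i)) ∧
  (∀ i, η i 0 = 0) ∧
  (∀ t ≥ (0:ℝ), ∀ i,
    Z t i = (∫ s in (0:ℝ)..t, (n : ℝ)^2 * (An n).mulVec (Z s) i) + η i t) ∧
  (∀ t ≥ (0:ℝ),
    ∑ i, ∫ s in Set.Icc (0:ℝ) t, (Z s i + V s i) ∂((η i).measure) = 0)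

open Set Filter Topology Finset Matrix

theorem Matrix.mulVec_apply_nonpos_of_forall_le {R ι : Type*} [CommRing R] [LinearOrder R]
    [IsOrderedRing R] [Fintype ι] {A : Matrix ι ι R} {k : ι}
    (hoff : ∀ i, i ≠ k → 0 ≤ A k i) (hrow : ∑ i, A k i ≤ 0) {w : ι → R}
    (hmax : ∀ i, w i ≤ w k) (hk : 0 ≤ w k) : (A *ᵥ w) k ≤ 0 := by
  have hsplit : (A *ᵥ w) k = ∑ i, A k i * (w i - w k) + (∑ i, A k i) * w k := by
    simp only [mulVec, dotProduct, mul_sub, Finset.sum_sub_distrib, Finset.sum_mul]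
    ring
  have hoff_terms : ∑ i, A k i * (w i - w k) ≤ 0 := by
    refine Finset.sum_nonpos fun i _ => ?_
    rcases eq_or_ne i k with rfl | hik
    · simp
    · exact mul_nonpos_of_nonneg_of_nonpos (hoff i hik) (sub_nonpos.2 (hmax i))
  rw [hsplit]
  exact add_nonpos hoff_terms (mul_nonpos_of_nonpos_of_nonneg hrow hk)

theorem image_le_of_exists_slope_left_le {g : ℝ → ℝ} {a b M : ℝ}
    (hg : ContinuousOn g (Icc a b)) (ha : g a ≤ M)
    (hslope : ∀ t ∈ Ioc a b, M < g t → ∀ ε > 0, ∃ s ∈ Ico a t, g t - g s ≤ ε * (t - s)) :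
    ∀ ⦃t⦄, t ∈ Icc a b → g t ≤ M := by
  intro t₁ ht₁
  by_contra! hM
  set ε := (g t₁ - M) / (b - a + 1)
  have hab : 0 ≤ b - a := by linarith [ht₁.1.trans ht₁.2]
  have hε : 0 < ε := div_pos (by linarith) (by linarith)
  have hεb : ε * (b - a + 1) = g t₁ - M := div_mul_cancel₀ _ (by linarith)
  -- the tilted function `u` still exceeds `M`, and at its maximum the left slope of `g` is `≥ ε`
  set u := fun t => g t - ε * (t - a)
  obtain ⟨t₀, ht₀, hmax⟩ := isCompact_Icc.exists_isMaxOn ⟨t₁, ht₁⟩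
    (hg.sub (continuousOn_const.mul (continuousOn_id.sub continuousOn_const)))
  have hu₁ : M < u t₁ := by
    have : ε * (t₁ - a) ≤ ε * (b - a) := by gcongr; exact ht₁.2
    simp only [u]
    linarith
  have hu₀ : M < u t₀ := hu₁.trans_le (hmax ht₁)
  have ht₀a : a < t₀ := by
    refine ht₀.1.lt_of_ne ?_
    rintro rfl
    simp only [u, sub_self, mul_zero, sub_zero] at hu₀
    linarith
  have hg₀ : M < g t₀ := by
    have : 0 ≤ ε * (t₀ - a) := mul_nonneg hε.le (by linarith)
    simp only [u] at hu₀
    linarith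
  obtain ⟨s, hs, hgs⟩ := hslope t₀ ⟨ht₀a, ht₀.2⟩ hg₀ (ε / 2) (half_pos hε)
  have hus : u s ≤ u t₀ := hmax ⟨hs.1, hs.2.le.trans ht₀.2⟩
  have : 0 < ε / 2 * (t₀ - s) := mul_pos (half_pos hε) (sub_pos.2 hs.2)
  simp only [u] at hus
  linarith

theorem forall_image_le_of_exists_slope_left_le {ι : Type*} [Fintype ι] {W : ι → ℝ → ℝ}
    {a b M : ℝ} (hW : ∀ i, ContinuousOn (W i) (Icc a b)) (ha : ∀ i, W i a ≤ M)
    (hslope : ∀ t ∈ Ioc a b, ∀ k, (∀ i, W i t ≤ W k t) → M < W k t →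
      ∀ ε > 0, ∃ s ∈ Ico a t, W k t - W k s ≤ ε * (t - s)) :
    ∀ t ∈ Icc a b, ∀ k, W k t ≤ M := by
  intro t ht k
  have hne : (univ : Finset ι).Nonempty := ⟨k, mem_univ k⟩
  refine (le_sup' (W · t) (mem_univ k)).trans ?_
  refine image_le_of_exists_slope_left_le (g := fun t => univ.sup' hne (W · t))
    (ContinuousOn.finset_sup'_apply hne fun i _ => hW i) (sup'_le _ _ fun i _ => ha i) ?_ ht
  intro t ht hM ε hε
  obtain ⟨k₀, -, hk₀⟩ := exists_mem_eq_sup' hne (W · t)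
  simp only [hk₀] at hM ⊢
  obtain ⟨s, hs, hle⟩ := hslope t ht k₀ (fun i => hk₀ ▸ le_sup' (W · t) (mem_univ i)) hM ε hε
  exact ⟨s, hs, (sub_le_sub_left (le_sup' (W · s) (mem_univ k₀)) _).trans hle⟩

theorem An_apply (n : ℕ) (k i : Fin (n - 1)) :
    An n k i = (if k = i then -2 else 0) + if |(k : ℤ) - i| = 1 then 1 else 0 := by
  rcases eq_or_ne k i with rfl | hki
  · simp [An]
  · simp [An, hki]

theorem Fin.card_filter_abs_sub_eq_one_le {m : ℕ} (k : Fin m) :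
    #{i : Fin m | |(k : ℤ) - i| = 1} ≤ 2 := by
  calc #{i : Fin m | |(k : ℤ) - i| = 1}
      ≤ #({(k : ℤ) - 1, (k : ℤ) + 1} : Finset ℤ) := by
        refine card_le_card_of_injOn (fun i : Fin m => ((i : ℕ) : ℤ)) ?_ ?_
        · intro i hi
          have := (mem_filter.1 hi).2
          rw [abs_eq zero_le_one] at this
          simp only [coe_insert, coe_singleton, Set.mem_insert_iff, Set.mem_singleton_iff]
          omega
        · intro i _ j _ hij
          exact Fin.ext (Nat.cast_injective hij)
    _ ≤ 2 := card_le_two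

theorem An_sum_row_nonpos (n : ℕ) (k : Fin (n - 1)) : ∑ i, An n k i ≤ 0 := by
  simp only [An_apply, Finset.sum_add_distrib, Finset.sum_ite_eq, Finset.mem_univ, if_true,
    sum_boole]
  have := Fin.card_filter_abs_sub_eq_one_le k
  have : (#{i : Fin (n - 1) | |(k : ℤ) - i| = 1} : ℝ) ≤ 2 := by exact_mod_cast this
  linarith

theorem An_apply_nonneg_of_ne (n : ℕ) {k i : Fin (n - 1)} (h : i ≠ k) : 0 ≤ An n k i := by
  rw [An_apply, if_neg (Ne.symm h), zero_add]
  split_ifs <;> norm_num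

theorem An_mulVec_apply_nonpos {n : ℕ} {k : Fin (n - 1)} {w : Fin (n - 1) → ℝ}
    (hmax : ∀ i, w i ≤ w k) (hk : 0 ≤ w k) : (An n *ᵥ w) k ≤ 0 :=
  mulVec_apply_nonpos_of_forall_le (fun _ => An_apply_nonneg_of_ne n) (An_sum_row_nonpos n k)
    hmax hk

theorem continuousOn_mulVec_apply {ι : Type*} [Fintype ι] (A : Matrix ι ι ℝ)
    {Z : ℝ → ι → ℝ} {S : Set ℝ} (hZ : ContinuousOn Z S) (k : ι) :
    ContinuousOn (fun r => (A *ᵥ Z r) k) S :=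
  continuousOn_pi.1 ((continuous_const.matrix_mulVec continuous_id).comp_continuousOn hZ) k

namespace IsSkorohodSolution

variable {n : ℕ} {V Z : ℝ → Fin (n - 1) → ℝ} {η : Fin (n - 1) → StieltjesFunction ℝ}

protected theorem continuousOn (h : IsSkorohodSolution n V Z η) : ContinuousOn Z (Ici 0) := h.1

protected theorem add_nonneg (h : IsSkorohodSolution n V Z η) {t : ℝ} (ht : 0 ≤ t)
    (i : Fin (n - 1)) : 0 ≤ Z t i + V t i := by
  linarith [h.2.1 t ht i]

theorem zero_eq (h : IsSkorohodSolution n V Z η) : Z 0 = 0 :=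
  funext fun i => by simpa [h.2.2.2.1 i] using h.2.2.2.2.1 0 le_rfl i

theorem intervalIntegrable_drift (h : IsSkorohodSolution n V Z η) {s t : ℝ} (hs : 0 ≤ s)
    (hst : s ≤ t) (k : Fin (n - 1)) :
    IntervalIntegrable (fun r => (n : ℝ) ^ 2 * (An n *ᵥ Z r) k) volume s t :=
  ((continuousOn_const.mul (continuousOn_mulVec_apply _ h.continuousOn k)).mono
    ((Icc_subset_Ici_iff hst).2 hs)).intervalIntegrable_of_Icc hst

theorem sub_eq (h : IsSkorohodSolution n V Z η) {s t : ℝ} (hs : 0 ≤ s) (hst : s ≤ t)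
    (k : Fin (n - 1)) :
    Z t k - Z s k = (∫ r in s..t, (n : ℝ) ^ 2 * (An n *ᵥ Z r) k) + (η k t - η k s) := by
  have ht : 0 ≤ t := hs.trans hst
  rw [h.2.2.2.2.1 t ht k, h.2.2.2.2.1 s hs k, ← intervalIntegral.integral_interval_sub_left
    (h.intervalIntegrable_drift le_rfl ht k) (h.intervalIntegrable_drift le_rfl hs k)]
  ring

theorem setIntegral_eq_zero (h : IsSkorohodSolution n V Z η) {t : ℝ} (ht : 0 ≤ t)
    (k : Fin (n - 1)) : ∫ r in Icc 0 t, (Z r k + V r k) ∂(η k).measure = 0 := by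
  refine (Finset.sum_eq_zero_iff_of_nonneg fun i _ => ?_).1 (h.2.2.2.2.2 t ht) k (mem_univ k)
  exact setIntegral_nonneg measurableSet_Icc fun r hr => h.add_nonneg hr.1 i

theorem eta_eq_of_forall_pos (h : IsSkorohodSolution n V Z η) (hV : ContinuousOn V (Ici 0))
    {s t : ℝ} (hs : 0 ≤ s) (hst : s ≤ t) {k : Fin (n - 1)}
    (hpos : ∀ r ∈ Ioc s t, 0 < Z r k + V r k) : η k t = η k s := by
  have hint : IntegrableOn (fun r => Z r k + V r k) (Icc 0 t) (η k).measure :=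
    ((continuousOn_pi.1 h.continuousOn k).add (continuousOn_pi.1 hV k)).mono Icc_subset_Ici_self
      |>.integrableOn_compact isCompact_Icc
  have hnonneg : 0 ≤ᵐ[(η k).measure.restrict (Icc 0 t)] fun r => Z r k + V r k :=
    ae_restrict_of_forall_mem measurableSet_Icc fun r hr => h.add_nonneg hr.1 k
  have hnull : (η k).measure (Ioc s t) = 0 := by
    by_contra hne
    have hsupp : 0 < (η k).measure (Function.support (fun r => Z r k + V r k) ∩ Icc 0 t) :=
      (pos_iff_ne_zero.2 hne).trans_le
        (measure_mono fun r hr => ⟨(hpos r hr).ne', hs.trans hr.1.le, hr.2⟩)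
    exact ((setIntegral_pos_iff_support_of_nonneg_ae hnonneg hint).2 hsupp).ne'
      (h.setIntegral_eq_zero (hs.trans hst) k)
  rw [StieltjesFunction.measure_Ioc, ENNReal.ofReal_eq_zero] at hnull
  linarith [(η k).mono hst]

variable {V₁ V₂ Z₁ Z₂ : ℝ → Fin (n - 1) → ℝ} {η₁ η₂ : Fin (n - 1) → StieltjesFunction ℝ}

theorem sub_sub_sub_le_integral (h₁ : IsSkorohodSolution n V₁ Z₁ η₁)
    (h₂ : IsSkorohodSolution n V₂ Z₂ η₂) (hV₁ : ContinuousOn V₁ (Ici 0)) {s t : ℝ} (hs : 0 ≤ s)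
    (hst : s ≤ t) {k : Fin (n - 1)} (hpos : ∀ r ∈ Ioc s t, 0 < Z₁ r k + V₁ r k) :
    (Z₁ t k - Z₂ t k) - (Z₁ s k - Z₂ s k) ≤
      ∫ r in s..t, (n : ℝ) ^ 2 * (An n *ᵥ (Z₁ r - Z₂ r)) k := by
  have hdrift : ∫ r in s..t, (n : ℝ) ^ 2 * (An n *ᵥ (Z₁ r - Z₂ r)) k =
      (∫ r in s..t, (n : ℝ) ^ 2 * (An n *ᵥ Z₁ r) k) -
        ∫ r in s..t, (n : ℝ) ^ 2 * (An n *ᵥ Z₂ r) k := by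
    simp only [mulVec_sub, Pi.sub_apply, mul_sub]
    exact intervalIntegral.integral_sub (h₁.intervalIntegrable_drift hs hst k)
      (h₂.intervalIntegrable_drift hs hst k)
  rw [hdrift, sub_sub_sub_comm, h₁.sub_eq hs hst, h₂.sub_eq hs hst,
    h₁.eta_eq_of_forall_pos hV₁ hs hst hpos]
  linarith [(η₂ k).mono hst]

theorem exists_sub_sub_sub_le (h₁ : IsSkorohodSolution n V₁ Z₁ η₁)
    (h₂ : IsSkorohodSolution n V₂ Z₂ η₂) (hV₁ : ContinuousOn V₁ (Ici 0)) {t : ℝ} (ht : 0 < t)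
    {k : Fin (n - 1)} (hmax : ∀ i, Z₁ t i - Z₂ t i ≤ Z₁ t k - Z₂ t k)
    (hk : 0 ≤ Z₁ t k - Z₂ t k) (hslack : 0 < Z₁ t k + V₁ t k) {ε : ℝ} (hε : 0 < ε) :
    ∃ s ∈ Ico 0 t, (Z₁ t k - Z₂ t k) - (Z₁ s k - Z₂ s k) ≤ ε * (t - s) := by
  set d := fun r => (n : ℝ) ^ 2 * (An n *ᵥ (Z₁ r - Z₂ r)) k
  have hd : ContinuousOn d (Ici 0) :=
    continuousOn_const.mul (continuousOn_mulVec_apply _ (h₁.continuousOn.sub h₂.continuousOn) k)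
  have hdt : d t ≤ 0 :=
    mul_nonpos_of_nonneg_of_nonpos (sq_nonneg _) (An_mulVec_apply_nonpos hmax hk)
  have hslack_cont : ContinuousOn (fun r => Z₁ r k + V₁ r k) (Ici 0) :=
    (continuousOn_pi.1 h₁.continuousOn k).add (continuousOn_pi.1 hV₁ k)
  have hnhds : Ici (0 : ℝ) ∈ 𝓝 t := Ici_mem_nhds ht
  have hgood : ∀ᶠ r in 𝓝 t, 0 ≤ r ∧ d r < ε ∧ 0 < Z₁ r k + V₁ r k :=
    (eventually_mem_set.2 hnhds).and
      (((hd.continuousAt hnhds).eventually_lt continuousAt_const (hdt.trans_lt hε)).and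
        (continuousAt_const.eventually_lt (hslack_cont.continuousAt hnhds) hslack))
  obtain ⟨l, hlt, hl⟩ := mem_nhdsLE_iff_exists_Ioc_subset.1 (nhdsWithin_le_nhds hgood)
  obtain ⟨s, hls, hst⟩ := exists_between (mem_Iio.1 hlt)
  have hsub : Icc s t ⊆ Ioc l t := fun r hr => ⟨hls.trans_le hr.1, hr.2⟩
  have hs : 0 ≤ s := (hl (hsub ⟨le_rfl, hst.le⟩)).1
  refine ⟨s, ⟨hs, hst⟩, ?_⟩
  calc (Z₁ t k - Z₂ t k) - (Z₁ s k - Z₂ s k)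
      ≤ ∫ r in s..t, d r := h₁.sub_sub_sub_le_integral h₂ hV₁ hs hst.le
        fun r hr => (hl (hsub (Ioc_subset_Icc_self hr))).2.2
    _ ≤ ∫ _ in s..t, ε := intervalIntegral.integral_mono_on hst.le
        ((hd.mono ((Icc_subset_Ici_iff hst.le).2 hs)).intervalIntegrable_of_Icc hst.le)
        intervalIntegrable_const fun r hr => (hl (hsub hr)).2.1.le
    _ = ε * (t - s) := by simp [mul_comm]

theorem sub_le_of_forall_sub_le (h₁ : IsSkorohodSolution n V₁ Z₁ η₁)
    (h₂ : IsSkorohodSolution n V₂ Z₂ η₂) (hV₁ : ContinuousOn V₁ (Ici 0)) {T M : ℝ} (hM : 0 ≤ M)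
    (hV : ∀ s ∈ Icc 0 T, ∀ j, V₂ s j - V₁ s j ≤ M) :
    ∀ t ∈ Icc 0 T, ∀ k, Z₁ t k - Z₂ t k ≤ M := by
  refine forall_image_le_of_exists_slope_left_le (W := fun k t => Z₁ t k - Z₂ t k)
    (fun i => ((continuousOn_pi.1 h₁.continuousOn i).sub
      (continuousOn_pi.1 h₂.continuousOn i)).mono Icc_subset_Ici_self)
    (fun i => by simp [h₁.zero_eq, h₂.zero_eq, hM]) ?_
  intro t ht k hmax hMt ε hε
  have hslack : 0 < Z₁ t k + V₁ t k := by
    linarith [h₂.add_nonneg ht.1.le k, hV t (Ioc_subset_Icc_self ht) k]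
  exact h₁.exists_sub_sub_sub_le h₂ hV₁ ht.1 hmax (hM.trans hMt.le) hslack hε

end IsSkorohodSolution

theorem bddAbove_setOf_abs_sub {ι : Type*} [Finite ι] {V₁ V₂ : ℝ → ι → ℝ} {S : Set ℝ}
    (hS : IsCompact S) (hV₁ : ContinuousOn V₁ S) (hV₂ : ContinuousOn V₂ S) :
    BddAbove {v : ℝ | ∃ s ∈ S, ∃ j, v = |V₁ s j - V₂ s j|} := by
  have hcover : {v : ℝ | ∃ s ∈ S, ∃ j, v = |V₁ s j - V₂ s j|} ⊆
      ⋃ j ∈ (Set.univ : Set ι), (fun s => |V₁ s j - V₂ s j|) '' S := by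
    rintro v ⟨s, hs, j, rfl⟩
    exact Set.mem_biUnion (Set.mem_univ j) ⟨s, hs, rfl⟩
  refine BddAbove.mono hcover (Set.finite_univ.bddAbove_biUnion.2 fun j _ => ?_)
  exact (hS.image_of_continuousOn
    ((continuousOn_pi.1 hV₁ j).sub (continuousOn_pi.1 hV₂ j)).abs).bddAbove

theorem skorohod_comparison_general (n : ℕ)
    (V1 V2 : ℝ → Fin (n-1) → ℝ)
    (hV1 : ContinuousOn V1 (Set.Ici 0)) (hV2 : ContinuousOn V2 (Set.Ici 0))
    (Z1 Z2 : ℝ → Fin (n-1) → ℝ) (η1 η2 : Fin (n-1) → StieltjesFunction ℝ)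
    (h1 : IsSkorohodSolution n V1 Z1 η1) (h2 : IsSkorohodSolution n V2 Z2 η2)
    (T : ℝ) (k : Fin (n-1)) (t : ℝ) (ht : t ∈ Set.Icc 0 T) :
    |Z1 t k - Z2 t k| ≤
      sSup {v : ℝ | ∃ s ∈ Set.Icc (0:ℝ) T, ∃ j : Fin (n-1), v = |V1 s j - V2 s j|} := by
  set M := sSup {v : ℝ | ∃ s ∈ Set.Icc (0:ℝ) T, ∃ j : Fin (n-1), v = |V1 s j - V2 s j|}
  have hle : ∀ s ∈ Icc 0 T, ∀ j, |V1 s j - V2 s j| ≤ M := fun s hs j =>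
    le_csSup (bddAbove_setOf_abs_sub isCompact_Icc (hV1.mono Icc_subset_Ici_self)
      (hV2.mono Icc_subset_Ici_self)) ⟨s, hs, j, rfl⟩
  have hM : 0 ≤ M := (abs_nonneg _).trans (hle t ht k)
  rw [abs_sub_le_iff]
  exact ⟨h1.sub_le_of_forall_sub_le h2 hV1 hM (fun s hs j => (abs_sub_le_iff.1 (hle s hs j)).2)
      t ht k,
    h2.sub_le_of_forall_sub_le h1 hV2 hM (fun s hs j => (abs_sub_le_iff.1 (hle s hs j)).1) t ht k⟩

/-- If `(Z¹, η¹)`, `(Z², η²)` solve the Skorohod-type problems with data `V¹`, `V²`,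
then `sup_{0≤t≤T} |Z¹_k(t) - Z²_k(t)| ≤ sup_{0≤t≤T, 1≤j≤n-1} |V¹_j(t) - V²_j(t)|`. -/
theorem skorohod_comparison (n : ℕ) (hn : 2 ≤ n)
    (V1 V2 : ℝ → Fin (n-1) → ℝ)
    (hV1 : ContinuousOn V1 (Set.Ici 0)) (hV2 : ContinuousOn V2 (Set.Ici 0))
    (Z1 Z2 : ℝ → Fin (n-1) → ℝ) (η1 η2 : Fin (n-1) → StieltjesFunction ℝ)
    (h1 : IsSkorohodSolution n V1 Z1 η1) (h2 : IsSkorohodSolution n V2 Z2 η2)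
    (T : ℝ) (hT : 0 < T) (k : Fin (n-1)) (t : ℝ) (ht : t ∈ Set.Icc 0 T) :
    |Z1 t k - Z2 t k| ≤
      sSup {v : ℝ | ∃ s ∈ Set.Icc (0:ℝ) T, ∃ j : Fin (n-1), v = |V1 s j - V2 s j|} :=
  skorohod_comparison_general n V1 V2 hV1 hV2 Z1 Z2 η1 η2 h1 h2 T k t ht
end
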